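/- If U''(s) > 0 for every s ∈ ℝ, then for every x ∈ ℝ^{2d}, the vectors e_{z₁}, e_{u₁}, …, e_{z_{d−1}}, e_{u_{d−1}} all belong to the linear span of {𝒰₀(x), 𝒰₁(x), …, 𝒰_{2d−3}(x)} in ℝ^{2d}. -/

import Mathlib

open scoped BigOperators

noncomputable section

abbrev E (d : ℕ) : Type := (Fin d → ℝ) × (Fin d → ℝ)

def ez (d : ℕ) (i : Fin d) : E d := (Pi.single i 1, 0)

def eu (d : ℕ) (i : Fin d) : E d := (0, Pi.single i 1)

noncomputable def ham (d : ℕ) (V U : ℝ → ℝ) (x : E d) : ℝ :=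
  (∑ i : Fin d, ((x.2 i) ^ 2 / 2 + V (x.1 i))) +
    ∑ i : Fin (d - 1),
      U (x.1 ⟨i.1 + 1, by have := i.2; omega⟩ - x.1 ⟨i.1, by have := i.2; omega⟩)

noncomputable def drift (d : ℕ) (γ₁ γd : ℝ) (V U : ℝ → ℝ) (x : E d) : E d :=
  (x.2, fun i =>
    -(fderiv ℝ (ham d V U) x (ez d i)) -
      (if i.1 = 0 then γ₁ * x.2 i else 0) -
      (if i.1 = d - 1 then γd * x.2 i else 0))

noncomputable def lie (d : ℕ) (X Y : E d → E d) (x : E d) : E d :=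
  fderiv ℝ Y x (X x) - fderiv ℝ X x (Y x)

noncomputable def UU (d : ℕ) (b : E d → E d) (v : E d) : ℕ → E d → E d
  | 0 => fun _ => v
  | n + 1 => lie d (UU d b v n) b

/-!
Order the coordinates of `ℝ^{2d}` as `u₁, z₁, u₂, z₂, …`. The derivative of the drift sends
`e_{u_m}` to `e_{z_m}` plus earlier terms, and `e_{z_m}` to `U''(z_{m+1} - z_m) e_{u_{m+1}}` plus
earlier terms. In the bracket `[X, b] = Db·X - DX·b` the second term stays within the span of
the coordinates already occupied by `X`. Hence, by induction, `𝒰_n(x)` vanishes beyond the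
`n`-th coordinate and its `n`-th coordinate is positive, so `𝒰₀(x), …, 𝒰_{2d-3}(x)` form a
triangular family spanning the first `2d - 2` coordinate directions.
-/

open Submodule in
theorem mem_span_range_of_triangular {K M : Type*} [Field K] [AddCommGroup M] [Module K M]
    (c : ℕ → Module.Dual K M) (hc : ∀ v, (∀ r, c r v = 0) → v = 0) {N : ℕ} (w : Fin N → M)
    (hw : ∀ n : Fin N, ∀ r, n.1 < r → c r (w n) = 0) (hwn : ∀ n : Fin N, c n (w n) ≠ 0)
    {v : M} (hv : ∀ r, N ≤ r → c r v = 0) : v ∈ span K (Set.range w) := by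
  suffices ∀ n ≤ N, ∀ v, (∀ r, n ≤ r → c r v = 0) → v ∈ span K (Set.range w) from
    this N le_rfl v hv
  intro n
  induction n with
  | zero => exact fun _ v hv => hc v (fun r => hv r r.zero_le) ▸ zero_mem _
  | succ n ih =>
    intro hn v hv
    set m : Fin N := ⟨n, hn⟩
    have hwm : w m ∈ span K (Set.range w) := subset_span ⟨m, rfl⟩
    have hrest : v - (c n v / c n (w m)) • w m ∈ span K (Set.range w) := by
      refine ih (Nat.le_of_succ_le hn) _ fun r hr => ?_
      rcases hr.eq_or_lt with rfl | hr
      · rw [map_sub, map_smul, smul_eq_mul, div_mul_cancel₀ _ (hwn m), sub_self]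
      · simp [hv r hr, hw m r hr]
    simpa using add_mem hrest (smul_mem _ (c n v / c n (w m)) hwm)

theorem ContinuousLinearMap.apply_fderiv_eq_zero {𝕜 F G H : Type*} [NontriviallyNormedField 𝕜]
    [NormedAddCommGroup F] [NormedSpace 𝕜 F] [NormedAddCommGroup G] [NormedSpace 𝕜 G]
    [NormedAddCommGroup H] [NormedSpace 𝕜 H] (L : G →L[𝕜] H) {X : F → G} {x : F}
    (hX : DifferentiableAt 𝕜 X x) (hL : ∀ y, L (X y) = 0) (w : F) :
    L (fderiv 𝕜 X x w) = 0 := by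
  have h := (L.hasFDerivAt.comp x hX.hasFDerivAt).fderiv
  rw [show ⇑L ∘ X = fun _ => 0 from funext hL, fderiv_const_apply] at h
  exact congrArg (· w) h.symm

namespace OscillatorChain

open scoped ContDiff

variable {d : ℕ}

lemma contDiff_lie {X Y : E d → E d} (hX : ContDiff ℝ ∞ X) (hY : ContDiff ℝ ∞ Y) :
    ContDiff ℝ ∞ (lie d X Y) :=
  ((hY.fderiv_right le_rfl).clm_apply hX).sub ((hX.fderiv_right le_rfl).clm_apply hY)

def zCoord (d : ℕ) (i : Fin d) : E d →L[ℝ] ℝ :=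
  (ContinuousLinearMap.proj i).comp (ContinuousLinearMap.fst ℝ _ _)

def uCoord (d : ℕ) (i : Fin d) : E d →L[ℝ] ℝ :=
  (ContinuousLinearMap.proj i).comp (ContinuousLinearMap.snd ℝ _ _)

@[simp] lemma zCoord_apply (i : Fin d) (x : E d) : zCoord d i x = x.1 i := rfl

@[simp] lemma uCoord_apply (i : Fin d) (x : E d) : uCoord d i x = x.2 i := rfl

/-- `coord d r` is the `r`-th coordinate in the order `u₀, z₀, u₁, z₁, …`, and `0` once
`r ≥ 2 * d`. -/
def coord (d r : ℕ) : E d →L[ℝ] ℝ :=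
  if h : r / 2 < d then (if r % 2 = 0 then uCoord d ⟨r / 2, h⟩ else zCoord d ⟨r / 2, h⟩) else 0

lemma coord_two_mul (m : Fin d) : coord d (2 * m) = uCoord d m := by
  simp [coord]

lemma coord_two_mul_add_one (m : Fin d) : coord d (2 * m + 1) = zCoord d m := by
  have h : (2 * m.1 + 1) / 2 = m := by omega
  simp [coord, Nat.add_mod, h]

lemma coord_of_le {r : ℕ} (h : 2 * d ≤ r) : coord d r = 0 := by
  simp [coord]; omega

lemma eq_zero_of_forall_coord_eq_zero {v : E d} (h : ∀ r, coord d r v = 0) : v = 0 := by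
  ext m
  · simpa [coord_two_mul_add_one] using h (2 * m + 1)
  · simpa [coord_two_mul] using h (2 * m)

def VanishesAbove (d n : ℕ) (v : E d) : Prop := ∀ r, n < r → coord d r v = 0

def HasLeadingCoord (d n : ℕ) (v : E d) : Prop := VanishesAbove d n v ∧ 0 < coord d n v

lemma VanishesAbove.mono {n m : ℕ} {v : E d} (h : VanishesAbove d n v) (hnm : n ≤ m) :
    VanishesAbove d m v :=
  fun r hr => h r (hnm.trans_lt hr)

lemma vanishesAbove_ez (i : Fin d) : VanishesAbove d (2 * i + 1) (ez d i) := by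
  intro r hr
  obtain ⟨m, rfl | rfl⟩ := Nat.even_or_odd' r <;> by_cases hm : m < d
  · simp [coord_two_mul ⟨m, hm⟩, ez]
  · simp [coord_of_le (by omega : 2 * d ≤ 2 * m)]
  · simp [coord_two_mul_add_one ⟨m, hm⟩, ez, Pi.single_apply, Fin.ext_iff]; omega
  · simp [coord_of_le (by omega : 2 * d ≤ 2 * m + 1)]

lemma vanishesAbove_eu (i : Fin d) : VanishesAbove d (2 * i) (eu d i) := by
  intro r hr
  obtain ⟨m, rfl | rfl⟩ := Nat.even_or_odd' r <;> by_cases hm : m < d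
  · simp [coord_two_mul ⟨m, hm⟩, eu, Pi.single_apply, Fin.ext_iff]; omega
  · simp [coord_of_le (by omega : 2 * d ≤ 2 * m)]
  · simp [coord_two_mul_add_one ⟨m, hm⟩, eu]
  · simp [coord_of_le (by omega : 2 * d ≤ 2 * m + 1)]

lemma coord_eu (i : Fin d) : coord d (2 * i) (eu d i) = 1 := by
  simp [coord_two_mul, eu]

def bond (d : ℕ) (j : Fin (d - 1)) : E d →L[ℝ] ℝ :=
  zCoord d ⟨j + 1, by have := j.2; omega⟩ - zCoord d ⟨j, by have := j.2; omega⟩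

variable {V U : ℝ → ℝ}

def gradHam (d : ℕ) (V U : ℝ → ℝ) (x : E d) : E d →L[ℝ] ℝ :=
  ∑ i, (x.2 i • uCoord d i + deriv V (x.1 i) • zCoord d i) +
    ∑ j, deriv U (bond d j x) • bond d j

lemma hasFDerivAt_ham (hV : Differentiable ℝ V) (hU : Differentiable ℝ U) (x : E d) :
    HasFDerivAt (ham d V U) (gradHam d V U x) x := by
  refine .add (.fun_sum fun i _ => .add ?_ ?_) (.fun_sum fun j _ => ?_)
  · have hsq : HasDerivAt (fun t : ℝ => t ^ 2 / 2) (x.2 i) (x.2 i) := by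
      simpa using (hasDerivAt_pow 2 (x.2 i)).div_const 2
    exact hsq.comp_hasFDerivAt x (uCoord d i).hasFDerivAt
  · exact (hV _).hasDerivAt.comp_hasFDerivAt x (zCoord d i).hasFDerivAt
  · exact (hU _).hasDerivAt.comp_hasFDerivAt x (bond d j).hasFDerivAt

def partialZHam (d : ℕ) (V U : ℝ → ℝ) (i : Fin d) (x : E d) : ℝ :=
  deriv V (x.1 i) + ∑ j, deriv U (bond d j x) * bond d j (ez d i)

lemma fderiv_ham_apply_ez (hV : Differentiable ℝ V) (hU : Differentiable ℝ U) (x : E d)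
    (i : Fin d) : fderiv ℝ (ham d V U) x (ez d i) = partialZHam d V U i x := by
  simp [(hasFDerivAt_ham hV hU x).fderiv, gradHam, partialZHam, ez, Pi.single_apply]

def damping (d : ℕ) (γ₁ γd : ℝ) (i : Fin d) : E d →L[ℝ] ℝ :=
  ((if i.1 = 0 then γ₁ else 0) + (if i.1 = d - 1 then γd else 0)) • uCoord d i

lemma drift_eq (γ₁ γd : ℝ) (hV : Differentiable ℝ V) (hU : Differentiable ℝ U) :
    drift d γ₁ γd V U = fun x => (x.2, fun i => -partialZHam d V U i x - damping d γ₁ γd i x) := by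
  ext x i
  · rfl
  · simp only [drift, fderiv_ham_apply_ez hV hU, damping, FunLike.coe_smul, Pi.smul_apply,
      uCoord_apply, smul_eq_mul]
    split_ifs <;> ring

def hessZHam (d : ℕ) (V U : ℝ → ℝ) (i : Fin d) (x : E d) : E d →L[ℝ] ℝ :=
  deriv (deriv V) (x.1 i) • zCoord d i +
    ∑ j, bond d j (ez d i) • deriv (deriv U) (bond d j x) • bond d j

lemma hasFDerivAt_partialZHam (hV : ContDiff ℝ 2 V) (hU : ContDiff ℝ 2 U) (i : Fin d)
    (x : E d) : HasFDerivAt (partialZHam d V U i) (hessZHam d V U i x) x := by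
  refine .add ?_ (.fun_sum fun j _ => .mul_const ?_ _)
  · exact (hV.differentiable_deriv_two _).hasDerivAt.comp_hasFDerivAt x (zCoord d i).hasFDerivAt
  · exact (hU.differentiable_deriv_two _).hasDerivAt.comp_hasFDerivAt x (bond d j).hasFDerivAt

variable {γ₁ γd : ℝ}

lemma fderiv_drift_apply (hV : ContDiff ℝ 2 V) (hU : ContDiff ℝ 2 U) (x v : E d) :
    fderiv ℝ (drift d γ₁ γd V U) x v =
      (v.2, fun i => -hessZHam d V U i x v - damping d γ₁ γd i v) := by
  have hderiv : HasFDerivAt (drift d γ₁ γd V U) ((ContinuousLinearMap.snd ℝ _ _).prod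
      (ContinuousLinearMap.pi fun i => -hessZHam d V U i x - damping d γ₁ γd i)) x := by
    rw [drift_eq γ₁ γd (hV.differentiable (by norm_num)) (hU.differentiable (by norm_num))]
    exact hasFDerivAt_snd.prodMk (hasFDerivAt_pi.2 fun i =>
      (hasFDerivAt_partialZHam hV hU i x).neg.sub (damping d γ₁ γd i).hasFDerivAt)
  simp [hderiv.fderiv]

lemma contDiff_drift (hV : ContDiff ℝ ∞ V) (hU : ContDiff ℝ ∞ U) :
    ContDiff ℝ ∞ (drift d γ₁ γd V U) := by
  have hV' := (contDiff_infty_iff_deriv.mp hV).2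
  have hU' := (contDiff_infty_iff_deriv.mp hU).2
  rw [drift_eq γ₁ γd (hV.differentiable (by simp)) (hU.differentiable (by simp))]
  refine contDiff_snd.prodMk (contDiff_pi.2 fun i => .sub (.neg ?_) (damping d γ₁ γd i).contDiff)
  exact (hV'.comp (zCoord d i).contDiff).add
    (.sum fun j _ => (hU'.comp (bond d j).contDiff).mul contDiff_const)

lemma hessZHam_apply_succ (x : E d) {k : ℕ} (hk : k + 1 < d) {v : E d}
    (hv : ∀ j : Fin d, k < j.1 → v.1 j = 0) :
    hessZHam d V U ⟨k + 1, hk⟩ x v =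
      -(deriv (deriv U) (bond d ⟨k, by omega⟩ x) * v.1 ⟨k, by omega⟩) := by
  rw [hessZHam, add_apply, sum_apply, Finset.sum_eq_single ⟨k, by omega⟩]
  · simp [bond, ez, hv ⟨k + 1, hk⟩ (by simp)]
  · intro j _ hj
    have hjk : j.1 ≠ k := fun h => hj (Fin.ext h)
    by_cases hjk' : j.1 = k + 1
    · simp [bond, hv ⟨j + 1, by omega⟩ (by simp; omega), hv ⟨j, by omega⟩ (by simp; omega)]
    · simp [bond, ez, Fin.ext_iff, hjk, hjk']
  · simp

lemma coord_succ_fderiv_drift (hV : ContDiff ℝ 2 V) (hU : ContDiff ℝ 2 U) (x : E d) {n : ℕ}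
    (hn : n + 1 < 2 * d) {v : E d} (hv : VanishesAbove d n v) :
    ∃ κ ∈ insert 1 (Set.range (deriv (deriv U))),
      coord d (n + 1) (fderiv ℝ (drift d γ₁ γd V U) x v) = κ * coord d n v := by
  obtain ⟨m, rfl | rfl⟩ := Nat.even_or_odd' n
  · refine ⟨1, Set.mem_insert _ _, ?_⟩
    rw [coord_two_mul_add_one ⟨m, by omega⟩, coord_two_mul ⟨m, by omega⟩]
    simp [fderiv_drift_apply hV hU]
  · refine ⟨_, Set.mem_insert_of_mem _ ⟨bond d ⟨m, by omega⟩ x, rfl⟩, ?_⟩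
    have hv1 (j : Fin d) (hj : m < j.1) : v.1 j = 0 := by
      simpa [coord_two_mul_add_one] using hv (2 * j + 1) (by omega)
    have hv2 : v.2 ⟨m + 1, by omega⟩ = 0 := by
      simpa using (coord_two_mul (d := d) ⟨m + 1, by omega⟩ ▸ hv (2 * (m + 1)) (by omega) :)
    rw [show 2 * m + 1 + 1 = 2 * (m + 1) by ring, coord_two_mul ⟨m + 1, by omega⟩,
      coord_two_mul_add_one ⟨m, by omega⟩]
    simp [fderiv_drift_apply hV hU, hessZHam_apply_succ x _ hv1, damping, hv2]

lemma VanishesAbove.fderiv_drift (hV : ContDiff ℝ 2 V) (hU : ContDiff ℝ 2 U) (x : E d)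
    {n : ℕ} {v : E d} (hv : VanishesAbove d n v) :
    VanishesAbove d (n + 1) (fderiv ℝ (drift d γ₁ γd V U) x v) := by
  intro r hr
  obtain ⟨s, rfl⟩ : ∃ s, r = s + 1 := ⟨r - 1, by omega⟩
  by_cases hs : s + 1 < 2 * d
  · obtain ⟨κ, -, h⟩ := coord_succ_fderiv_drift hV hU x hs (hv.mono (by omega : n ≤ s))
    rw [h, hv s (by omega), mul_zero]
  · rw [coord_of_le (by omega), zero_apply]

lemma lie_drift_hasLeadingCoord (hV : ContDiff ℝ ∞ V) (hU : ContDiff ℝ ∞ U)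
    (hU'' : ∀ s, 0 < deriv (deriv U) s) {X : E d → E d} (hX : ContDiff ℝ ∞ X) {n : ℕ}
    (hn : n + 1 < 2 * d) (hXn : ∀ y, HasLeadingCoord d n (X y)) :
    ContDiff ℝ ∞ (lie d X (drift d γ₁ γd V U)) ∧
      ∀ y, HasLeadingCoord d (n + 1) (lie d X (drift d γ₁ γd V U) y) := by
  have hV2 : ContDiff ℝ 2 V := hV.of_le (by norm_cast)
  have hU2 : ContDiff ℝ 2 U := hU.of_le (by norm_cast)
  have hcoord (y : E d) (r : ℕ) (hr : n < r) : coord d r (lie d X (drift d γ₁ γd V U) y) =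
      coord d r (fderiv ℝ (drift d γ₁ γd V U) y (X y)) := by
    rw [lie, map_sub, (coord d r).apply_fderiv_eq_zero (hX.differentiable (by simp) y)
      (fun z => (hXn z).1 r hr), sub_zero]
  refine ⟨contDiff_lie hX (contDiff_drift hV hU), fun y => ⟨fun r hr => ?_, ?_⟩⟩
  · rw [hcoord y r (by omega)]
    exact (hXn y).1.fderiv_drift hV2 hU2 y r hr
  · obtain ⟨κ, hκ, h⟩ := coord_succ_fderiv_drift (γ₁ := γ₁) (γd := γd) hV2 hU2 y hn (hXn y).1
    have hκ : 0 < κ := by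
      rcases hκ with rfl | ⟨s, rfl⟩
      exacts [one_pos, hU'' s]
    rw [hcoord y _ (by omega), h]
    exact mul_pos hκ (hXn y).2

lemma UU_drift_hasLeadingCoord (hV : ContDiff ℝ ∞ V) (hU : ContDiff ℝ ∞ U)
    (hU'' : ∀ s, 0 < deriv (deriv U) s) {v₀ : E d} {n₀ : ℕ} (hv₀ : HasLeadingCoord d n₀ v₀) :
    ∀ k, n₀ + k < 2 * d → ContDiff ℝ ∞ (UU d (drift d γ₁ γd V U) v₀ k) ∧
      ∀ y, HasLeadingCoord d (n₀ + k) (UU d (drift d γ₁ γd V U) v₀ k y)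
  | 0, _ => ⟨contDiff_const, fun _ => hv₀⟩
  | k + 1, hk =>
    have ih := UU_drift_hasLeadingCoord hV hU hU'' hv₀ k (by omega)
    lie_drift_hasLeadingCoord hV hU hU'' ih.1 hk ih.2

end OscillatorChain

open OscillatorChain in
theorem stmt14 (d : ℕ) (hd : 3 ≤ d) (γ₁ γd : ℝ) (V U : ℝ → ℝ)
    (hV : ContDiff ℝ (⊤ : ℕ∞) V) (hU : ContDiff ℝ (⊤ : ℕ∞) U)
    (hU'' : ∀ s : ℝ, 0 < deriv (deriv U) s) :
    ∀ x : E d, ∀ i : Fin (d - 1),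
      ez d ⟨i.1, by have := i.2; omega⟩ ∈
        Submodule.span ℝ
          (Set.range fun n : Fin (2 * d - 2) => UU d (drift d γ₁ γd V U) (eu d ⟨0, by omega⟩) n.1 x) ∧
      eu d ⟨i.1, by have := i.2; omega⟩ ∈
        Submodule.span ℝ
          (Set.range fun n : Fin (2 * d - 2) => UU d (drift d γ₁ γd V U) (eu d ⟨0, by omega⟩) n.1 x) := by
  intro x i
  have hd0 : 0 < d := by omega
  have hUU := UU_drift_hasLeadingCoord (γ₁ := γ₁) (γd := γd) (n₀ := 0) hV hU hU''
    ⟨vanishesAbove_eu ⟨0, hd0⟩, zero_lt_one.trans_eq (coord_eu ⟨0, hd0⟩).symm⟩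
  have hspan (v : E d) (hv : VanishesAbove d (2 * d - 3) v) : v ∈ Submodule.span ℝ
      (Set.range fun n : Fin (2 * d - 2) => UU d (drift d γ₁ γd V U) (eu d ⟨0, by omega⟩) n.1 x) :=
    mem_span_range_of_triangular (fun r => (coord d r : E d →ₗ[ℝ] ℝ))
      (fun v h => eq_zero_of_forall_coord_eq_zero h) _
      (fun n r hr => ((hUU n (by omega)).2 x).1 r (by simpa using hr))
      (fun n => by simpa using (((hUU n (by omega)).2 x).2).ne') (fun r hr => hv r (by omega))
  exact ⟨hspan _ ((vanishesAbove_ez _).mono (by simp; omega)),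
    hspan _ ((vanishesAbove_eu _).mono (by simp; omega))⟩
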